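/- arXiv:nlin/0212007 — 3 statements merged into one kernel-verified Lean document; each statement's English description precedes it below -/
import Mathlib

section
/- Fix an integer n ≥ 1 and an integer k with −n < k < n and k ≠ 0. If complex coefficients α_l (for l ranging over those indices with 1 ≤ l ≤ n and 1 ≤ l − k ≤ n) satisfy Σ_l α_l · Y^l_{l−k}(x) = 0 for every x ∈ ℂⁿ with u(x) ≠ 0, then α_l = 0 for all such l. That is, for each fixed nonzero off-diagonal index k, the family { Y^l_{l−k} } is linearly independent over ℂ. -/
/-
Evaluate the relation at the basis vector `e_m`, `m = l - k`, where `u = 1`. Every field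
`Y^b_{b-k}` carries the factor `x_{b-k}`, which vanishes at `e_m` unless `b = l`, and
`Y^l_m(e_m) = e_m - e_l`. Since `k ≠ 0` we have `l ≠ m`, so the `l`-th coordinate of the
relation reads `-α_l = 0`.
-/

/-- `u x = ∑ j x_j`. -/
noncomputable def u (n : ℕ) (x : Fin n → ℂ) : ℂ := ∑ j, x j

/-- The vector fields `Y^l_m`, with components
`Y^l_m(x)_i = x_m * u(x)^(l-m-1) * (x_i - δ_{i,l} u(x))` (integer power). -/
noncomputable def Y (n : ℕ) (l m : Fin n) (x : Fin n → ℂ) : Fin n → ℂ :=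
  fun i => x m * u n x ^ ((l : ℤ) - (m : ℤ) - 1) * (x i - if i = l then u n x else 0)

theorem u_single {n : ℕ} (m : Fin n) : u n (Pi.single m 1) = 1 := by
  simp [u]

theorem Y_single_of_ne {n : ℕ} (l : Fin n) {m m' : Fin n} (h : m' ≠ m) :
    Y n l m' (Pi.single m 1) = 0 := by
  ext i
  simp [Y, Pi.single_apply, h]

theorem Y_single_self {n : ℕ} (l m : Fin n) :
    Y n l m (Pi.single m 1) = Pi.single m 1 - Pi.single l 1 := by
  ext i
  simp [Y, u_single, Pi.single_apply]

/-- for each fixed nonzero `k` with `-n < k < n`, the family `{Y^l_{l-k}}`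
(over those `l` for which `l - k` is also a valid index) is linearly independent over `ℂ`:
any linear combination that vanishes on `{u ≠ 0}` has all its coefficients zero. -/
theorem stmt_6 (n : ℕ) (k : ℤ) (hk₀ : k ≠ 0)
    (α : Fin n → ℂ)
    (hsum : ∀ x : Fin n → ℂ, u n x ≠ 0 →
      (∑ l : Fin n, if h : 0 ≤ (l : ℤ) - k ∧ (l : ℤ) - k < n then
          α l • Y n l ⟨((l : ℤ) - k).toNat, by omega⟩ x
        else 0) = 0) :
    ∀ l : Fin n, 0 ≤ (l : ℤ) - k → (l : ℤ) - k < n → α l = 0 := by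
  intro l hl₀ hl₁
  set m : Fin n := ⟨((l : ℤ) - k).toNat, by omega⟩
  have hlm : l ≠ m := by
    simp only [m, ne_eq, Fin.ext_iff]
    omega
  have hrel := hsum (Pi.single m 1) (by rw [u_single]; exact one_ne_zero)
  rw [Finset.sum_eq_single l] at hrel
  · rw [dif_pos ⟨hl₀, hl₁⟩, Y_single_self] at hrel
    have hcoord := congrFun hrel l
    rw [Pi.smul_apply, Pi.sub_apply, Pi.single_eq_of_ne hlm, Pi.single_eq_same] at hcoord
    simpa using hcoord
  · intro b _ hbl
    split_ifs
    · rw [Y_single_of_ne b, smul_zero]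
      simp only [m, ne_eq, Fin.ext_iff]
      omega
    · rfl
  · simp
end

section
/- Fix an integer n ≥ 1. The diagonal vector fields pairwise commute: for all 1 ≤ l, m ≤ n, [Y^l_l, Y^m_m](x) = 0 for every x ∈ ℂⁿ with u(x) ≠ 0. Hence the (n−1)-dimensional linear space L' spanned by Y^1_1, …, Y^n_n is an Abelian Lie algebra. -/
noncomputable def lieBracket (n : ℕ) (V W : (Fin n → ℂ) → Fin n → ℂ)
    (x : Fin n → ℂ) : Fin n → ℂ :=
  fderiv ℂ W x (V x) - fderiv ℂ V x (W x)

section DiagonalFields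

variable {n : ℕ}

theorem Y_diag_apply (l : Fin n) (x : Fin n → ℂ) (i : Fin n) :
    Y n l l x i = x l * (u n x)⁻¹ * (x i - if i = l then u n x else 0) := by
  rw [Y, sub_self, zero_sub, zpow_neg_one]

theorem Y_diag_eq_smul {x : Fin n → ℂ} (hx : u n x ≠ 0) (l : Fin n) :
    Y n l l x = x l • ((u n x)⁻¹ • x - Pi.single l 1) := by
  ext i
  rw [Y_diag_apply]
  by_cases hi : i = l
  · subst hi; simp [field]
  · simp only [hi, if_false, sub_zero, Pi.smul_apply, Pi.sub_apply, smul_eq_mul,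
      Pi.single_eq_of_ne hi]
    ring

theorem sum_Y_diag {x : Fin n → ℂ} (hx : u n x ≠ 0) (l : Fin n) : ∑ i, Y n l l x i = 0 := by
  simp only [Y_diag_eq_smul hx, Pi.smul_apply, Pi.sub_apply, smul_eq_mul, ← Finset.mul_sum,
    Finset.sum_sub_distrib, Finset.sum_pi_single', Finset.mem_univ, if_true]
  rw [← u, inv_mul_cancel₀ hx, sub_self, mul_zero]

theorem hasFDerivAt_u (x : Fin n → ℂ) :
    HasFDerivAt (u n) (∑ j, ContinuousLinearMap.proj (R := ℂ) (φ := fun _ : Fin n => ℂ) j) x :=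
  HasFDerivAt.fun_sum (u := Finset.univ) (A := fun (j : Fin n) (y : Fin n → ℂ) => y j)
    fun j _ => hasFDerivAt_apply j x

theorem continuous_u : Continuous (u n) :=
  continuous_finsetSum _ fun j _ => continuous_apply j

theorem fderiv_Y_diag_apply {x : Fin n → ℂ} (hx : u n x ≠ 0) (l : Fin n) (v : Fin n → ℂ) :
    fderiv ℂ (Y n l l) x v = v l • ((u n x)⁻¹ • x - Pi.single l 1) + (x l * (u n x)⁻¹) • v
      - (x l * (u n x)⁻¹ ^ 2 * ∑ j, v j) • x := by
  have hY : Y n l l =ᶠ[nhds x] fun y => y l • ((u n y)⁻¹ • y - Pi.single l 1) :=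
    Filter.eventuallyEq_of_mem ((isOpen_compl_singleton.preimage continuous_u).mem_nhds hx)
      fun y hy => Y_diag_eq_smul hy l
  have hG := (hasFDerivAt_apply l x).smul
    ((((hasFDerivAt_inv hx).comp x (hasFDerivAt_u x)).smul (hasFDerivAt_id x)).sub_const
      (Pi.single l 1 : Fin n → ℂ))
  rw [(hG.congr_of_eventuallyEq hY).fderiv]
  ext i
  simp only [Pi.add_apply, Pi.sub_apply, Pi.smul_apply, Pi.smul_apply', smul_eq_mul,
    Function.comp_apply, id_eq, add_apply, smul_apply, sum_apply, ContinuousLinearMap.id_apply,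
    ContinuousLinearMap.smulRight_apply, ContinuousLinearMap.comp_apply,
    ContinuousLinearMap.proj_apply, ContinuousLinearMap.toSpanSingleton_apply]
  ring

theorem lieBracket_Y_diag {x : Fin n → ℂ} (hx : u n x ≠ 0) (l m : Fin n) :
    lieBracket n (Y n l l) (Y n m m) x = 0 := by
  rw [lieBracket, fderiv_Y_diag_apply hx, fderiv_Y_diag_apply hx, sum_Y_diag hx, sum_Y_diag hx,
    Y_diag_eq_smul hx l, Y_diag_eq_smul hx m]
  ext i
  simp only [Pi.add_apply, Pi.sub_apply, Pi.smul_apply, smul_eq_mul, Pi.single_apply,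
    mul_zero, zero_mul, sub_zero, Pi.zero_apply]
  by_cases hlm : l = m
  · subst hlm
    ring
  · simp only [hlm, Ne.symm hlm, if_false]
    ring

end DiagonalFields

section DiagonalSpan

variable (n : ℕ)

noncomputable def diagCombination :
    (Fin n → ℂ) →ₗ[ℂ] ({x : Fin n → ℂ // u n x ≠ 0} → Fin n → ℂ) :=
  Fintype.linearCombination ℂ fun l x => Y n l l x.1

variable {n}

theorem diagCombination_apply (c : Fin n → ℂ) (x : {x : Fin n → ℂ // u n x ≠ 0}) (i : Fin n) :
    diagCombination n c x i = x.1 i * ((u n x.1)⁻¹ * ∑ l, c l * x.1 l - c i) := by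
  simp only [diagCombination, Fintype.linearCombination_apply, Finset.sum_apply, Pi.smul_apply,
    Y_diag_eq_smul x.2, Pi.sub_apply, Pi.single_apply, smul_eq_mul, mul_sub, mul_ite, mul_one,
    mul_zero, Finset.sum_sub_distrib, Finset.sum_ite_eq, Finset.mem_univ, if_true, ← mul_assoc,
    ← Finset.sum_mul]
  ring

theorem ker_diagCombination [NeZero n] :
    LinearMap.ker (diagCombination n) = Submodule.span ℂ {1} := by
  apply le_antisymm
  · intro c hc
    have hu : u n 1 ≠ 0 := by simp [u, NeZero.ne n]
    refine Submodule.mem_span_singleton.mpr ⟨(n : ℂ)⁻¹ * ∑ l, c l, funext fun i => ?_⟩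
    have := congrFun (congrFun hc ⟨1, hu⟩) i
    rw [diagCombination_apply] at this
    simpa [u, sub_eq_zero, eq_comm] using this
  · rw [Submodule.span_le, Set.singleton_subset_iff, SetLike.mem_coe, LinearMap.mem_ker]
    ext x i
    simp only [diagCombination_apply, Pi.one_apply, one_mul, Pi.zero_apply]
    rw [← u, inv_mul_cancel₀ x.2, sub_self, mul_zero]

theorem finrank_range_diagCombination [NeZero n] :
    Module.finrank ℂ (LinearMap.range (diagCombination n)) = n - 1 := by
  have := (diagCombination n).finrank_range_add_finrank_ker
  rw [ker_diagCombination, finrank_span_singleton one_ne_zero, Module.finrank_fin_fun] at this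
  omega

end DiagonalSpan

/-- the diagonal vector fields pairwise commute on `{u ≠ 0}`, and the linear
space `L'` they span (as vector fields on `{x : u(x) ≠ 0}`) has dimension `n - 1`;
hence `L'` is an `(n-1)`-dimensional Abelian Lie algebra. -/
theorem stmt_8 (n : ℕ) (hn : 1 ≤ n) :
    (∀ l m : Fin n, ∀ x : Fin n → ℂ, u n x ≠ 0 →
      lieBracket n (Y n l l) (Y n m m) x = 0) ∧
    Module.finrank ℂ (Submodule.span ℂ (Set.range
      fun l : Fin n => fun x : {x : Fin n → ℂ // u n x ≠ 0} => Y n l l x.1)) = n - 1 := by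
  have : NeZero n := ⟨by omega⟩
  refine ⟨fun l m x hx => lieBracket_Y_diag hx l m, ?_⟩
  rw [← Fintype.range_linearCombination]
  exact finrank_range_diagCombination
end

section
/- Fix an integer n ≥ 1 and complex constants α_0, α_1, …, α_n, and let f : ℂⁿ → ℂⁿ be the generalized ladder vector field f(x)_i = x_i · Σ_{j=1}^n (α_0 + α_i − α_j) x_j. Then for every 1 ≤ l ≤ n, the diagonal vector field Y^l_l is a Lie symmetry of the generalized ladder system: [f, Y^l_l](x) = 0 for every x ∈ ℂⁿ with u(x) ≠ 0. Hence the generalized ladder system possesses the (n−1)-dimensional Abelian Lie algebra of Lie symmetries spanned by Y^1_1, …, Y^n_n. -/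
/-!
Write `Y^l_l = g • P` with `g x = x_l / u(x)` and `P x = x - u(x) e_l` (`projKerU n l`), the
linear projection onto `{u = 0}` along `e_l`. The ladder matrix acts by
`(a x)_i = (α₀ + α_i) u(x) - A(x)` with `A(x) = Σ_j α_j x_j`, so `u(f x) = α₀ u(x)²`. Since `P` is
linear and kills `u`, a direct computation gives `[f, P] = (A - α_l u) • P`, while
`Dg · f = g (α_l u - A)`. By the Leibniz rule `[f, g • P] = (Dg · f) • P + g • [f, P]`, and the
two contributions cancel.
-/

open ContinuousLinearMap Matrix

noncomputable def uCLM (n : ℕ) : (Fin n → ℂ) →L[ℂ] ℂ := ∑ j, proj j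

@[simp]
lemma uCLM_apply (n : ℕ) (x : Fin n → ℂ) : uCLM n x = u n x := by
  simp [uCLM, u]

lemma hasFDerivAt_u_s11 (n : ℕ) (x : Fin n → ℂ) : HasFDerivAt (u n) (uCLM n) x := by
  rw [show u n = ⇑(uCLM n) from funext fun y => (uCLM_apply n y).symm]
  exact (uCLM n).hasFDerivAt

noncomputable def projKerU (n : ℕ) (l : Fin n) : (Fin n → ℂ) →L[ℂ] (Fin n → ℂ) :=
  ContinuousLinearMap.id ℂ _ - (uCLM n).smulRight (Pi.single l 1)

lemma projKerU_apply (n : ℕ) (l : Fin n) (x : Fin n → ℂ) :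
    projKerU n l x = x - u n x • Pi.single l 1 := by
  simp [projKerU]

lemma Y_self_eq_smul (n : ℕ) (l : Fin n) : Y n l l = fun x => (x l / u n x) • projKerU n l x := by
  funext x i
  simp [Y, projKerU_apply, Pi.single_apply, div_eq_mul_inv]

section LotkaVolterra

variable {𝕜 ι : Type*} [NontriviallyNormedField 𝕜] [CompleteSpace 𝕜] [Fintype ι]

def lotkaVolterra (a : Matrix ι ι 𝕜) (x : ι → 𝕜) : ι → 𝕜 := x * a *ᵥ x

lemma fderiv_lotkaVolterra_apply (a : Matrix ι ι 𝕜) (x v : ι → 𝕜) :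
    fderiv 𝕜 (lotkaVolterra a) x v = x * a *ᵥ v + a *ᵥ x * v := by
  have h := (hasFDerivAt_id x).mul (LinearMap.toContinuousLinearMap a.mulVecLin).hasFDerivAt
  rw [show lotkaVolterra a = id * ⇑(LinearMap.toContinuousLinearMap a.mulVecLin) from rfl, h.fderiv]
  simp

end LotkaVolterra

variable {n : ℕ}

lemma lieBracket_smul_right {V W : (Fin n → ℂ) → Fin n → ℂ} {g : (Fin n → ℂ) → ℂ}
    {x : Fin n → ℂ} (hg : DifferentiableAt ℂ g x) (hW : DifferentiableAt ℂ W x) :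
    lieBracket n V (fun y => g y • W y) x =
      fderiv ℂ g x (V x) • W x + g x • lieBracket n V W x := by
  simp only [lieBracket, fderiv_fun_smul hg hW, _root_.add_apply,
    _root_.smul_apply, smulRight_apply, map_smul, smul_sub]
  abel

lemma lieBracket_clm_right (V : (Fin n → ℂ) → Fin n → ℂ) (W : (Fin n → ℂ) →L[ℂ] (Fin n → ℂ))
    (x : Fin n → ℂ) : lieBracket n V W x = W (V x) - fderiv ℂ V x (W x) := by
  rw [lieBracket, W.fderiv]

lemma u_projKerU (l : Fin n) (x : Fin n → ℂ) : u n (projKerU n l x) = 0 := by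
  rw [← uCLM_apply, projKerU_apply, map_sub, map_smul, uCLM_apply, uCLM_apply]
  simp [u]

variable (α₀ : ℂ) (α : Fin n → ℂ)

def ladderMatrix : Matrix (Fin n) (Fin n) ℂ := Matrix.of fun i j => α₀ + α i - α j

lemma ladderMatrix_mulVec (x : Fin n → ℂ) :
    ladderMatrix α₀ α *ᵥ x = fun i => (α₀ + α i) * u n x - α ⬝ᵥ x := by
  funext i
  simp only [mulVec, dotProduct, ladderMatrix, of_apply, u, Finset.mul_sum,
    ← Finset.sum_sub_distrib]
  exact Finset.sum_congr rfl fun j _ => by ring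

lemma u_lotkaVolterra_ladderMatrix (x : Fin n → ℂ) :
    u n (lotkaVolterra (ladderMatrix α₀ α) x) = α₀ * u n x ^ 2 := by
  have h : ∀ i, lotkaVolterra (ladderMatrix α₀ α) x i =
      α₀ * u n x * x i + u n x * (α i * x i) - α ⬝ᵥ x * x i := by
    intro i
    simp only [lotkaVolterra, Pi.mul_apply, ladderMatrix_mulVec]
    ring
  simp only [u, h, Finset.sum_sub_distrib, Finset.sum_add_distrib, ← Finset.mul_sum,
    dotProduct]
  ring

lemma lieBracket_lotkaVolterra_projKerU (l : Fin n) (x : Fin n → ℂ) :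
    lieBracket n (lotkaVolterra (ladderMatrix α₀ α)) (projKerU n l) x =
      (α ⬝ᵥ x - α l * u n x) • projKerU n l x := by
  have hα : α ⬝ᵥ projKerU n l x = α ⬝ᵥ x - α l * u n x := by
    simp [projKerU_apply, dotProduct_sub, mul_comm]
  rw [lieBracket_clm_right, fderiv_lotkaVolterra_apply, ladderMatrix_mulVec, ladderMatrix_mulVec,
    u_projKerU, hα, projKerU_apply, u_lotkaVolterra_ladderMatrix]
  funext i
  rcases eq_or_ne i l with rfl | hil
  · simp [lotkaVolterra, ladderMatrix_mulVec, projKerU_apply]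
    ring
  · simp [lotkaVolterra, ladderMatrix_mulVec, projKerU_apply, hil]
    ring

lemma hasFDerivAt_coord_div_u (l : Fin n) {x : Fin n → ℂ} (hx : u n x ≠ 0) :
    HasFDerivAt (fun y => y l / u n y)
      ((u n x)⁻¹ • proj l - (x l / u n x ^ 2) • uCLM n) x := by
  have h := (hasFDerivAt_apply l x).fun_mul ((hasFDerivAt_inv hx).comp x (hasFDerivAt_u_s11 n x))
  simp only [div_eq_mul_inv]
  refine h.congr_fderiv ?_
  ext v
  simp
  ring

lemma fderiv_coord_div_u_lotkaVolterra (l : Fin n) {x : Fin n → ℂ} (hx : u n x ≠ 0) :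
    fderiv ℂ (fun y => y l / u n y) x (lotkaVolterra (ladderMatrix α₀ α) x) =
      x l / u n x * (α l * u n x - α ⬝ᵥ x) := by
  rw [(hasFDerivAt_coord_div_u l hx).fderiv]
  simp only [_root_.sub_apply, _root_.smul_apply, proj_apply, uCLM_apply,
    u_lotkaVolterra_ladderMatrix]
  simp [lotkaVolterra, ladderMatrix_mulVec]
  field_simp
  ring

theorem stmt_11_general (n : ℕ) (α₀ : ℂ) (α : Fin n → ℂ)
    (f : (Fin n → ℂ) → Fin n → ℂ)
    (hf : ∀ x i, f x i = x i * ∑ j : Fin n, (α₀ + α i - α j) * x j) :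
    ∀ l : Fin n, ∀ x : Fin n → ℂ, u n x ≠ 0 →
      lieBracket n f (Y n l l) x = 0 := by
  intro l x hx
  obtain rfl : f = lotkaVolterra (ladderMatrix α₀ α) := by
    funext y i
    simp [hf, lotkaVolterra, ladderMatrix, mulVec, dotProduct]
  rw [Y_self_eq_smul, lieBracket_smul_right (hasFDerivAt_coord_div_u l hx).differentiableAt
    (projKerU n l).differentiableAt, fderiv_coord_div_u_lotkaVolterra α₀ α l hx,
    lieBracket_lotkaVolterra_projKerU, smul_smul, ← add_smul, ← mul_add, sub_add_sub_cancel,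
    sub_self, mul_zero, zero_smul]

/-- each diagonal field `Y^l_l` is a Lie symmetry of the generalized ladder
system `f(x)_i = x_i ∑_j (α₀ + α_i - α_j) x_j` on the set where `u(x) ≠ 0`. -/
theorem stmt_11 (n : ℕ) (hn : 1 ≤ n) (α₀ : ℂ) (α : Fin n → ℂ)
    (f : (Fin n → ℂ) → Fin n → ℂ)
    (hf : ∀ x i, f x i = x i * ∑ j : Fin n, (α₀ + α i - α j) * x j) :
    ∀ l : Fin n, ∀ x : Fin n → ℂ, u n x ≠ 0 →
      lieBracket n f (Y n l l) x = 0 :=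
  stmt_11_general n α₀ α f hf
end
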